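/- arXiv:2408.01066 — 3 statements merged into one kernel-verified Lean document; each statement's English description precedes it below -/
import Mathlib

section
/- Let S be a real symmetric unreduced tridiagonal N×N matrix (N > 1) with eigenvalues λ_1 = 0 < λ_2 < ... < λ_N. Then every leading principal submatrix of S of size p×p, for 1 ≤ p ≤ N−1, is positive definite. -/
open Matrix Polynomial

open scoped ComplexOrder

/-!
The eigenvalues of `S` are the `μ i ≥ μ 0 = 0`, so `S` is positive semidefinite, and so is each
leading principal submatrix `S_p`. If `xᵀ S_p x = 0`, the extension `y` of `x` by zeros satisfies
`yᵀ S y = 0`, hence `S y = 0`. As `y` vanishes from index `p < N` on, row `j + 1` of `S y = 0`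
reads `S (j+1) j * y j = 0` for `j = p - 1, …, 0`, and the subdiagonal of `S` has no zeros,
so `y = 0`.
-/

def IsTridiagonal {N : ℕ} (M : Matrix (Fin N) (Fin N) ℝ) : Prop :=
  ∀ i j : Fin N, ((i : ℕ) + 1 < j ∨ (j : ℕ) + 1 < i) → M i j = 0

def IsUnreduced {N : ℕ} (M : Matrix (Fin N) (Fin N) ℝ) : Prop :=
  ∀ i j : Fin N, (i : ℕ) + 1 = j → (M i j ≠ 0 ∧ M j i ≠ 0)

namespace Matrix

variable {m n 𝕜 : Type*} [Fintype m] [Fintype n]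

section Submatrix

variable {R : Type*} [NonUnitalNonAssocSemiring R] {e : m → n}

lemma submatrix_mulVec_comp_of_eq_zero_off_range (A : Matrix n n R) (he : e.Injective)
    {y : n → R} (hy : ∀ j ∉ Set.range e, y j = 0) :
    A.submatrix e e *ᵥ (y ∘ e) = (A *ᵥ y) ∘ e := by
  ext i
  exact Fintype.sum_of_injective e he _ _ (fun j hj => by simp [hy j hj]) fun _ => rfl

lemma dotProduct_comp_of_eq_zero_off_range (he : e.Injective) {x : n → R}
    (hx : ∀ j ∉ Set.range e, x j = 0) (z : n → R) :
    x ∘ e ⬝ᵥ z ∘ e = x ⬝ᵥ z :=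
  Fintype.sum_of_injective e he _ _ (fun j hj => by simp [hx j hj]) fun _ => rfl

end Submatrix

lemma IsHermitian.posSemidef_of_isRoot_charpoly_nonneg [RCLike 𝕜] [DecidableEq n]
    {A : Matrix n n 𝕜} (hA : A.IsHermitian)
    (h : ∀ r : ℝ, A.charpoly.IsRoot (r : 𝕜) → 0 ≤ r) : A.PosSemidef := by
  refine hA.posSemidef_iff_eigenvalues_nonneg.mpr fun i => h _ ?_
  rw [← mem_spectrum_iff_isRoot_charpoly]
  exact spectrum.algebraMap_mem 𝕜 (hA.eigenvalues_mem_spectrum_real i)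

lemma PosSemidef.posDef_submatrix [RCLike 𝕜] {A : Matrix n n 𝕜} (hA : A.PosSemidef)
    {e : m → n} (he : e.Injective)
    (hker : ∀ y, A *ᵥ y = 0 → (∀ j ∉ Set.range e, y j = 0) → y = 0) :
    (A.submatrix e e).PosDef := by
  classical
  refine posDef_iff_dotProduct_mulVec.mpr ⟨hA.isHermitian.submatrix e, fun x hx => ?_⟩
  set y : n → 𝕜 := Function.extend e x 0
  have hyx : y ∘ e = x := funext (he.extend_apply x 0)
  have hy : ∀ j ∉ Set.range e, y j = 0 := fun j hj => by simp [y, Function.extend_apply' _ _ _ hj]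
  have hstar : ∀ j ∉ Set.range e, star y j = 0 := fun j hj => by simp [hy j hj]
  have hform : star x ⬝ᵥ (A.submatrix e e *ᵥ x) = star y ⬝ᵥ (A *ᵥ y) := by
    rw [← hyx, submatrix_mulVec_comp_of_eq_zero_off_range A he hy]
    exact dotProduct_comp_of_eq_zero_off_range he hstar _
  have hne : star y ⬝ᵥ (A *ᵥ y) ≠ 0 := fun h0 => hx <| by
    rw [← hyx, hker y ((hA.dotProduct_mulVec_zero_iff y).mp h0) hy]
    rfl
  rw [hform]
  exact lt_of_le_of_ne (hA.dotProduct_mulVec_nonneg y) hne.symm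

end Matrix

namespace IsTridiagonal

variable {N : ℕ} {S : Matrix (Fin N) (Fin N) ℝ}

lemma mulVec_apply_succ (htri : IsTridiagonal S) {y : Fin N → ℝ} (j : Fin N)
    (hj : (j : ℕ) + 1 < N) (hy : ∀ k : Fin N, (j : ℕ) < k → y k = 0) :
    (S *ᵥ y) ⟨j + 1, hj⟩ = S ⟨j + 1, hj⟩ j * y j := by
  refine Finset.sum_eq_single j (fun k _ hkj => ?_)
    fun hj => absurd (Finset.mem_univ j) hj
  rcases lt_or_gt_of_ne (Fin.val_ne_of_ne hkj) with hlt | hgt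
  · exact mul_eq_zero_of_left (htri ⟨j + 1, hj⟩ k (Or.inr (Nat.succ_lt_succ hlt))) _
  · exact mul_eq_zero_of_right _ (hy k hgt)

lemma eq_zero_of_mulVec_eq_zero (htri : IsTridiagonal S) (hunr : IsUnreduced S) {p : ℕ}
    (hp : p < N) {y : Fin N → ℝ} (hSy : S *ᵥ y = 0) (hy : ∀ j : Fin N, p ≤ j → y j = 0) :
    y = 0 := by
  suffices h : ∀ k : ℕ, ∀ j : Fin N, p ≤ j + k → y j = 0 from
    funext fun j => h p j (Nat.le_add_left p j)
  intro k
  induction k with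
  | zero => exact hy
  | succ k ih =>
    intro j hj
    by_cases hjk : p ≤ j + k
    · exact ih j hjk
    have hj1 : (j : ℕ) + 1 < N := by omega
    have hrow := htri.mulVec_apply_succ j hj1 fun l hl => ih l (by omega)
    rw [hSy, Pi.zero_apply, eq_comm] at hrow
    exact (mul_eq_zero.mp hrow).resolve_left (hunr j _ rfl).2

end IsTridiagonal

/-- For a real symmetric unreduced tridiagonal matrix (N > 1) with eigenvalues
`0 = λ₁ < λ₂ < ... < λ_N`, every leading principal submatrix of size `p × p`,
`1 ≤ p ≤ N - 1`, is positive definite. -/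
theorem stmt4 {N : ℕ} (hN : 1 < N) (S : Matrix (Fin N) (Fin N) ℝ)
    (hS : S.IsSymm) (htri : IsTridiagonal S) (hunr : IsUnreduced S)
    (μ : Fin N → ℝ) (hμ : StrictMono μ) (hμ0 : μ ⟨0, by omega⟩ = 0)
    (hchar : S.charpoly = ∏ i, (X - C (μ i))) :
    ∀ (p : ℕ) (_ : 1 ≤ p) (hp : p < N),
      (S.submatrix (Fin.castLE hp.le) (Fin.castLE hp.le)).PosDef := by
  intro p _ hp
  have hPSD : S.PosSemidef := by
    refine (isHermitian_iff_isSymm.mpr hS).posSemidef_of_isRoot_charpoly_nonneg fun r hr => ?_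
    rw [RCLike.ofReal_real_eq_id, id, hchar] at hr
    obtain ⟨i, -, hi⟩ := (isRoot_prod _ _ _).mp hr
    have hri : r = μ i := (root_X_sub_C.mp hi).symm
    rw [hri, ← hμ0]
    exact hμ.monotone (Nat.zero_le i)
  refine hPSD.posDef_submatrix (Fin.castLE_injective _) fun y hSy hy =>
    htri.eq_zero_of_mulVec_eq_zero hunr hp hSy fun j hj => hy j ?_
  simpa [Fin.range_castLE] using hj
end

section
/- For real numbers 0 < λ_2 < λ_3, there exists a 3×3 real symmetric tridiagonal matrix of the form T = [[x, −x, 0], [−x, x+y, −y], [0, −y, y]] with eigenvalues {0, λ_2, λ_3} if and only if 10 λ_2 λ_3 ≤ 3λ_2² + 3λ_3². -/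
open Matrix Polynomial

/-- The 3×3 symmetric tridiagonal matrix with rows `(x, -x, 0)`, `(-x, x+y, -y)`,
`(0, -y, y)`. -/
def T3 (x y : ℝ) : Matrix (Fin 3) (Fin 3) ℝ :=
  !![x, -x, 0; -x, x + y, -y; 0, -y, y]

lemma T3_charpoly (x y : ℝ) :
    (T3 x y).charpoly = X ^ 3 - C (2 * (x + y)) * X ^ 2 + C (3 * (x * y)) * X := by
  rw [Matrix.charpoly, Matrix.det_fin_three]
  simp [charmatrix_apply_eq, charmatrix_apply_ne, T3, map_ofNat]
  ring

lemma rhs_expand (l2 l3 : ℝ) :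
    X * (X - C l2) * (X - C l3) = X ^ 3 - C (l2 + l3) * X ^ 2 + C (l2 * l3) * X := by
  simp only [map_add, _root_.map_mul]
  ring

/-- Given `0 < λ₂ < λ₃`, there exist real `x, y` such that `T3 x y` has eigenvalues
`{0, λ₂, λ₃}` if and only if `10 λ₂ λ₃ ≤ 3 λ₂² + 3 λ₃²`. -/
theorem stmt12 (l2 l3 : ℝ) (h2 : 0 < l2) (h23 : l2 < l3) :
    (∃ x y : ℝ, (T3 x y).charpoly = X * (X - C l2) * (X - C l3)) ↔
      10 * l2 * l3 ≤ 3 * l2 ^ 2 + 3 * l3 ^ 2 := by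
  constructor
  · rintro ⟨x, y, hp⟩
    rw [T3_charpoly, rhs_expand] at hp
    have e2 := congrArg (fun p => p.coeff 2) hp
    have e1 := congrArg (fun p => p.coeff 1) hp
    simp only [coeff_add, coeff_sub, coeff_C_mul, coeff_mul_X, coeff_X_pow, coeff_C] at e2 e1
    norm_num at e2 e1
    nlinarith [sq_nonneg (x - y), sq_nonneg (l2 + l3 - 2 * (x - y))]
  · intro h
    set s : ℝ := (l2 + l3) / 2 with hs
    have hnn : 0 ≤ s ^ 2 - 4 * (l2 * l3 / 3) := by nlinarith
    set d : ℝ := Real.sqrt (s ^ 2 - 4 * (l2 * l3 / 3)) with hdd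
    have hd : d ^ 2 = s ^ 2 - 4 * (l2 * l3 / 3) := Real.sq_sqrt hnn
    refine ⟨(s + d) / 2, (s - d) / 2, ?_⟩
    rw [T3_charpoly, rhs_expand]
    have hsum : 2 * ((s + d) / 2 + (s - d) / 2) = l2 + l3 := by rw [hs]; ring
    have hprod : 3 * ((s + d) / 2 * ((s - d) / 2)) = l2 * l3 := by
      have : (s + d) / 2 * ((s - d) / 2) = (s ^ 2 - d ^ 2) / 4 := by ring
      rw [this, hd]; ring
    rw [hsum, hprod]
end

section
/- Let λ_1 < λ_2 < ... < λ_N be distinct real numbers, D = diag(λ_1, ..., λ_N), and q ∈ ℝ^N a unit vector with all entries nonzero. If Q is an orthogonal matrix sending e_1 to q and H is an orthogonal Householder-tridiagonalization matrix with H e_1 = e_1 such that S = Hᵀ Qᵀ D Q H is tridiagonal, then S is unreduced (all off-diagonal entries of S are nonzero). -/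
open Matrix Polynomial

/-- If `D = diag(λ₁, ..., λ_N)` has distinct entries, `q` is a unit vector with all
entries nonzero, `Q` is orthogonal with `Q e₁ = q`, `H` is orthogonal with
`H e₁ = e₁`, and `S = Hᵀ Qᵀ D Q H` is tridiagonal, then `S` is unreduced. -/
theorem stmt18 {N : ℕ} (lam : Fin (N + 1) → ℝ) (hlam : StrictMono lam)
    (q : Fin (N + 1) → ℝ) (hq : ∑ i, q i ^ 2 = 1) (hqnz : ∀ i, q i ≠ 0)
    (Q H : Matrix (Fin (N + 1)) (Fin (N + 1)) ℝ)
    (hQ : Qᵀ * Q = 1) (hH : Hᵀ * H = 1)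
    (hQe : Q.mulVec (Pi.single 0 1) = q)
    (hHe : H.mulVec (Pi.single 0 1) = Pi.single 0 1)
    (S : Matrix (Fin (N + 1)) (Fin (N + 1)) ℝ)
    (hSdef : S = Hᵀ * Qᵀ * Matrix.diagonal lam * Q * H)
    (htri : IsTridiagonal S) :
    IsUnreduced S := by
  set P := Q * H with hP
  have hPo : Pᵀ * P = 1 := by
    rw [hP, transpose_mul, Matrix.mul_assoc, ← Matrix.mul_assoc Qᵀ, hQ,
      Matrix.one_mul, hH]
  have hPo' : P * Pᵀ = 1 := mul_eq_one_comm.mp hPo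
  have hPe : P *ᵥ Pi.single 0 1 = q := by
    rw [hP, ← mulVec_mulVec, hHe, hQe]
  have hS : S = Pᵀ * Matrix.diagonal lam * P := by
    rw [hSdef, hP, transpose_mul]
    simp [Matrix.mul_assoc]
  have hSsymm : Sᵀ = S := by
    rw [hS]
    simp [transpose_mul, Matrix.mul_assoc]
  -- main claim: S i j ≠ 0 whenever i+1 = j
  intro i j hij
  suffices h : S i j ≠ 0 by
    refine ⟨h, ?_⟩
    have : S j i = Sᵀ i j := rfl
    rw [this, hSsymm]; exact h
  intro hc
  have hc' : S j i = 0 := by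
    have : S j i = Sᵀ i j := rfl
    rw [this, hSsymm]; exact hc
  -- the invariant subspace
  set W : Submodule ℝ (Fin (N + 1) → ℝ) :=
    { carrier := {v | ∀ l : Fin (N + 1), (i : ℕ) < (l : ℕ) → v l = 0}
      add_mem' := fun ha hb l hl => by simp [ha l hl, hb l hl]
      zero_mem' := fun l hl => rfl
      smul_mem' := fun c a ha l hl => by simp [ha l hl] } with hW
  have hWmem : ∀ v : Fin (N + 1) → ℝ,
      v ∈ W ↔ ∀ l : Fin (N + 1), (i : ℕ) < (l : ℕ) → v l = 0 := fun v => Iff.rfl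
  have hInv : ∀ v, v ∈ W → S *ᵥ v ∈ W := by
    intro v hv l hl
    show ∑ m, S l m * v m = 0
    refine Finset.sum_eq_zero fun m _ => ?_
    by_cases hm : (i : ℕ) < (m : ℕ)
    · rw [hv m hm, mul_zero]
    · push_neg at hm
      have hml : (m : ℕ) + 1 ≤ (l : ℕ) := by omega
      rcases eq_or_lt_of_le hml with hml | hml
      · have hmi : m = i := by
          apply Fin.ext
          omega
        have hlj : l = j := by
          apply Fin.ext
          omega
        rw [hmi, hlj, hc', zero_mul]
      · rw [htri l m (Or.inr hml), zero_mul]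
  -- Krylov vectors
  set w : ℕ → (Fin (N + 1) → ℝ) :=
    fun m => Pᵀ *ᵥ (fun t => lam t ^ m * q t) with hw
  have hw0 : w 0 = Pi.single 0 1 := by
    have : (fun t => lam t ^ 0 * q t) = q := by funext t; simp
    rw [hw]
    simp only [this]
    rw [← hPe, mulVec_mulVec, hPo, one_mulVec]
  have hwsucc : ∀ m, w (m + 1) = S *ᵥ w m := by
    intro m
    have hmat : Pᵀ * Matrix.diagonal lam * P * Pᵀ = Pᵀ * Matrix.diagonal lam := by
      rw [Matrix.mul_assoc (Pᵀ * Matrix.diagonal lam), hPo', Matrix.mul_one]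
    rw [hw, hS]
    show Pᵀ *ᵥ (fun t => lam t ^ (m + 1) * q t)
        = (Pᵀ * Matrix.diagonal lam * P) *ᵥ (Pᵀ *ᵥ fun t => lam t ^ m * q t)
    rw [mulVec_mulVec, hmat, ← mulVec_mulVec]
    have hd : (Matrix.diagonal lam *ᵥ fun t => lam t ^ m * q t)
        = fun t => lam t ^ (m + 1) * q t := by
      funext t
      rw [mulVec_diagonal]
      ring
    rw [hd]
  have hwW : ∀ m, w m ∈ W := by
    intro m
    induction m with
    | zero =>
      rw [hw0]
      intro l hl
      refine Pi.single_eq_of_ne (fun h => ?_) 1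
      subst h
      simp at hl
    | succ m ih => rw [hwsucc]; exact hInv _ ih
  -- rows of P lie in W
  have hrow : ∀ t : Fin (N + 1), (fun l => P t l) ∈ W := by
    intro t
    have hinj : Set.InjOn lam ↑(Finset.univ : Finset (Fin (N + 1))) :=
      fun a _ b _ hab => hlam.injective hab
    set p : ℝ[X] := Lagrange.basis Finset.univ lam t with hp
    have hsum : ∑ m ∈ p.support, p.coeff m • w m ∈ W :=
      Submodule.sum_mem W fun m _ => Submodule.smul_mem W _ (hwW m)
    have hkey : ∑ m ∈ p.support, p.coeff m • w m = q t • (fun l => P t l) := by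
      funext l
      have h1 : (∑ m ∈ p.support, p.coeff m • w m) l
          = ∑ m ∈ p.support, ∑ s, p.coeff m * (Pᵀ l s * (lam s ^ m * q s)) := by
        simp [hw, Matrix.mulVec, dotProduct, Finset.mul_sum]
      rw [h1, Finset.sum_comm]
      have h2 : ∀ s : Fin (N + 1),
          ∑ m ∈ p.support, p.coeff m * (Pᵀ l s * (lam s ^ m * q s))
            = p.eval (lam s) * (Pᵀ l s * q s) := by
        intro s
        rw [Polynomial.eval_eq_sum, Polynomial.sum, Finset.sum_mul]
        refine Finset.sum_congr rfl fun m _ => ?_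
        ring
      have h3 : ∀ s : Fin (N + 1), p.eval (lam s) = if s = t then 1 else 0 := by
        intro s
        by_cases hst : s = t
        · subst hst
          simp [hp, Lagrange.eval_basis_self hinj (Finset.mem_univ s)]
        · simp only [hst, if_false, hp]
          exact Lagrange.eval_basis_of_ne (Ne.symm hst) (Finset.mem_univ s)
      simp only [h2, h3, ite_mul, one_mul, zero_mul]
      rw [Finset.sum_ite_eq' Finset.univ t fun s => Pᵀ l s * q s]
      simp [Matrix.transpose_apply, mul_comm]
    rw [hkey] at hsum
    exact (Submodule.smul_mem_iff W (hqnz t)).mp hsum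
  -- contradiction
  have h1 : (Pᵀ * P) j j = 1 := by rw [hPo]; simp
  rw [Matrix.mul_apply] at h1
  have h0 : ∀ l, Pᵀ j l * P l j = 0 := by
    intro l
    have := hrow l j (by omega)
    simp only at this
    rw [this, mul_zero]
  rw [Finset.sum_eq_zero fun l _ => h0 l] at h1
  exact one_ne_zero h1.symm
end
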